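/- For every CBPP instance, packing patterns correspond to color-alternating 0–L paths in the AF_ca graph: (a) for every packing pattern (u_1, …, u_k), the path that starts at vertex 0, successively traverses the item arcs (s_{t−1}, s_t, c_{u_t}) where s_t = l_{u_1} + ⋯ + l_{u_t} (so s_0 = 0), and, if s_k < L, ends with the loss arc (s_k, L, Q+1), is a path from 0 to L in the AF_ca graph in which no two consecutive arcs have the same color; and (b) conversely, for every path from 0 to L in the AF_ca graph in which no two consecutive arcs have the same color, the sequence of items read off its item arcs (choosing, for each item arc (i,j,q), an item u ∈ I with l_u = j−i and c_u = q) is a packing pattern. -/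

import Mathlib

open scoped Classical

/-- An instance of the Colored Bin Packing Problem: bin capacity `L > 0`, `Q ≥ 2` colors,
items `Fin n` each with a length in `(0, L]`, a positive demand and a color in `{1, …, Q}`. -/
structure CBPP where
  L : ℕ
  Q : ℕ
  hL : 0 < L
  hQ : 2 ≤ Q
  n : ℕ
  len : Fin n → ℕ
  hlenPos : ∀ u, 0 < len u
  hlenLe : ∀ u, len u ≤ L
  dem : Fin n → ℕ
  hdemPos : ∀ u, 0 < dem u
  col : Fin n → ℕ
  hcol : ∀ u, col u ∈ Finset.Icc 1 Q

namespace CBPP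

variable (P : CBPP)

/-- Item arc `(i, j, q)` of the AF_ca graph: `0 ≤ i < j ≤ L`, color `q ∈ {1,…,Q}`, and there
is an item of length `j − i` and color `q`. -/
def IsItemArc (a : ℕ × ℕ × ℕ) : Prop :=
  a.1 < a.2.1 ∧ a.2.1 ≤ P.L ∧ a.2.2 ∈ Finset.Icc 1 P.Q ∧
    ∃ u : Fin P.n, P.len u = a.2.1 - a.1 ∧ P.col u = a.2.2

/-- Loss arc `(i, L, Q+1)` of the AF_ca graph, for `1 ≤ i ≤ L − 1`. -/
def IsLossArc (a : ℕ × ℕ × ℕ) : Prop :=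
  a.2.2 = P.Q + 1 ∧ a.2.1 = P.L ∧ 1 ≤ a.1 ∧ a.1 ≤ P.L - 1

def IsArc (a : ℕ × ℕ × ℕ) : Prop := P.IsItemArc a ∨ P.IsLossArc a

/-- The (finite) arc set `A` of the AF_ca graph. -/
noncomputable def arcs : Finset (ℕ × ℕ × ℕ) :=
  (Finset.range (P.L + 1) ×ˢ Finset.range (P.L + 1) ×ˢ Finset.range (P.Q + 2)).filter
    (fun a => P.IsArc a)

/-- Total flow on arcs entering vertex `j`. -/
noncomputable def inflow (x : ℕ × ℕ × ℕ → ℝ) (j : ℕ) : ℝ :=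
  ∑ a ∈ P.arcs.filter (fun a => a.2.1 = j), x a

/-- Total flow on arcs leaving vertex `j`. -/
noncomputable def outflow (x : ℕ × ℕ × ℕ → ℝ) (j : ℕ) : ℝ :=
  ∑ a ∈ P.arcs.filter (fun a => a.1 = j), x a

/-- Total flow on arcs of color `q` entering vertex `j`. -/
noncomputable def inflowC (x : ℕ × ℕ × ℕ → ℝ) (j q : ℕ) : ℝ :=
  ∑ a ∈ P.arcs.filter (fun a => a.2.1 = j ∧ a.2.2 = q), x a

/-- Total flow on arcs of colors in `{1,…,Q+1} \ {q}` leaving vertex `j`. -/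
noncomputable def outflowNotC (x : ℕ × ℕ × ℕ → ℝ) (j q : ℕ) : ℝ :=
  ∑ a ∈ P.arcs.filter (fun a => a.1 = j ∧ a.2.2 ≠ q), x a

/-- AF_ca-feasibility of a nonnegative real solution `(x, z)`. -/
structure AFcaFeasible (x : ℕ × ℕ × ℕ → ℝ) (z : ℝ) : Prop where
  nonneg : ∀ a ∈ P.arcs, 0 ≤ x a
  znonneg : 0 ≤ z
  flow_source : P.inflow x 0 - P.outflow x 0 = -z
  flow_mid : ∀ j, 1 ≤ j → j ≤ P.L - 1 → P.inflow x j - P.outflow x j = 0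
  flow_sink : P.inflow x P.L - P.outflow x P.L = z
  color_alt : ∀ j, 1 ≤ j → j ≤ P.L - 1 → ∀ q ∈ Finset.Icc 1 P.Q,
    P.inflowC x j q ≤ P.outflowNotC x j q
  demand : ∀ u : Fin P.n,
    (∑ a ∈ P.arcs.filter (fun a => a.2.1 = a.1 + P.len u ∧ a.2.2 = P.col u), x a) = P.dem u

end CBPP

namespace CBPP

variable (P : CBPP)

/-- A packing pattern: a finite sequence of items whose total length is at most `L` and in
which no two consecutive items have the same color. -/
def IsPattern (pat : List (Fin P.n)) : Prop :=
  (pat.map P.len).sum ≤ P.L ∧ List.Chain' (fun u v => P.col u ≠ P.col v) pat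

end CBPP

namespace CBPP

variable (P : CBPP)

/-- A color-alternating path from vertex `0` to vertex `L` in the AF_ca graph: a nonempty
list of arcs of `A`, starting at `0`, ending at `L`, consecutive arcs sharing endpoints and
having different colors. -/
def IsCAPath (p : List (ℕ × ℕ × ℕ)) : Prop :=
  p ≠ [] ∧ (∀ a ∈ p, a ∈ P.arcs) ∧
    p.headI.1 = 0 ∧ p.getLastI.2.1 = P.L ∧
    List.Chain' (fun a b => a.2.1 = b.1 ∧ a.2.2 ≠ b.2.2) p

end CBPP

namespace CBPP

/-- The list of item arcs obtained by packing the items of `pat` successively from packing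
point `s`: the `t`-th arc is `(s_{t−1}, s_t, c_{u_t})` where `s_t = s + l_{u_1} + ⋯ + l_{u_t}`. -/
def itemArcList (P : CBPP) : ℕ → List (Fin P.n) → List (ℕ × ℕ × ℕ)
  | _, [] => []
  | s, u :: rest => (s, s + P.len u, P.col u) :: itemArcList P (s + P.len u) rest

/-- The AF_ca path associated with a packing pattern: its item arcs, followed by the loss
arc `(s_k, L, Q+1)` whenever the total length `s_k` is less than `L`. -/
def patPath (P : CBPP) (pat : List (Fin P.n)) : List (ℕ × ℕ × ℕ) :=
  P.itemArcList 0 pat ++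
    (if (pat.map P.len).sum < P.L then [((pat.map P.len).sum, P.L, P.Q + 1)] else [])

end CBPP


namespace CBPP
variable (P : CBPP)

lemma getLastI_cons_of_ne_nil {α : Type*} [Inhabited α] (a : α) {l : List α} (h : l ≠ []) :
    (a :: l).getLastI = l.getLastI := by
  cases l with
  | nil => exact absurd rfl h
  | cons b l' => rw [List.getLastI_eq_getLast?, List.getLastI_eq_getLast?,
      List.getLast?_cons_cons]

lemma isArc_mem_arcs {a : ℕ × ℕ × ℕ} (h : P.IsArc a) : a ∈ P.arcs := by
  have hQL := P.hL
  simp only [arcs, Finset.mem_filter, Finset.mem_product, Finset.mem_range]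
  refine ⟨⟨?_, ?_, ?_⟩, h⟩
  · rcases h with ⟨h1, h2, _⟩ | ⟨_, _, _, h4⟩ <;> omega
  · rcases h with ⟨_, h2, _⟩ | ⟨_, h2, _⟩ <;> omega
  · rcases h with ⟨_, _, h3, _⟩ | ⟨h1, _⟩
    · simp only [Finset.mem_Icc] at h3; omega
    · omega

lemma arc_start_lt {a : ℕ × ℕ × ℕ} (h : P.IsArc a) : a.1 < P.L := by
  have := P.hL
  rcases h with ⟨h1, h2, _⟩ | ⟨_, _, _, h4⟩ <;> omega

lemma mem_itemArcList : ∀ (s : ℕ) (pat : List (Fin P.n)), ∀ a ∈ P.itemArcList s pat,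
    ∃ u ∈ pat, a.2.1 = a.1 + P.len u ∧ a.2.2 = P.col u ∧ s ≤ a.1 ∧
      a.2.1 ≤ s + (pat.map P.len).sum
  | s, [], a, ha => by simp [itemArcList] at ha
  | s, u :: rest, a, ha => by
    simp only [itemArcList, List.mem_cons] at ha
    rcases ha with rfl | ha
    · refine ⟨u, by simp, rfl, rfl, le_refl _, ?_⟩
      simp only [List.map_cons, List.sum_cons]
      omega
    · obtain ⟨v, hv, h1, h2, h3, h4⟩ := mem_itemArcList (s + P.len u) rest a ha
      refine ⟨v, by simp [hv], h1, h2, by omega, ?_⟩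
      simp only [List.map_cons, List.sum_cons]
      omega

lemma itemArcList_ne_nil {s : ℕ} {pat : List (Fin P.n)} (h : pat ≠ []) :
    P.itemArcList s pat ≠ [] := by
  cases pat with
  | nil => exact absurd rfl h
  | cons u rest => simp [itemArcList]

lemma itemArcList_getLastI : ∀ (s : ℕ) (pat : List (Fin P.n)), pat ≠ [] →
    (P.itemArcList s pat).getLastI.2.1 = s + (pat.map P.len).sum ∧
    ∃ u : Fin P.n, (P.itemArcList s pat).getLastI.2.2 = P.col u
  | s, [], h => absurd rfl h
  | s, [u], _ => by
    simp only [itemArcList, List.getLastI, List.map_cons, List.map_nil, List.sum_cons,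
      List.sum_nil]
    exact ⟨by omega, u, rfl⟩
  | s, u :: v :: rest, _ => by
    have ih := itemArcList_getLastI (s + P.len u) (v :: rest) (by simp)
    have hne : P.itemArcList (s + P.len u) (v :: rest) ≠ [] := P.itemArcList_ne_nil (by simp)
    have hEq : (P.itemArcList s (u :: v :: rest)).getLastI
        = (P.itemArcList (s + P.len u) (v :: rest)).getLastI := by
      show ((s, s + P.len u, P.col u) :: P.itemArcList (s + P.len u) (v :: rest)).getLastI = _
      exact getLastI_cons_of_ne_nil _ hne
    rw [hEq]
    refine ⟨?_, ih.2⟩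
    rw [ih.1]
    simp only [List.map_cons, List.sum_cons]
    omega

lemma itemArcList_chain' : ∀ (s : ℕ) (pat : List (Fin P.n)),
    List.Chain' (fun u v => P.col u ≠ P.col v) pat →
    List.Chain' (fun a b => a.2.1 = b.1 ∧ a.2.2 ≠ b.2.2) (P.itemArcList s pat)
  | s, [], _ => by simp [itemArcList, List.Chain']
  | s, [u], _ => by simp [itemArcList, List.Chain']
  | s, u :: v :: rest, h => by
    rw [List.Chain', List.isChain_cons_cons] at h
    have ih := itemArcList_chain' (s + P.len u) (v :: rest) h.2
    show List.Chain' _ ((s, s + P.len u, P.col u) :: (s + P.len u, s + P.len u + P.len v,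
      P.col v) :: P.itemArcList (s + P.len u + P.len v) rest)
    rw [List.Chain', List.isChain_cons_cons]
    exact ⟨⟨rfl, h.1⟩, ih⟩

lemma itemArcList_headI {s : ℕ} {u : Fin P.n} {rest : List (Fin P.n)} :
    (P.itemArcList s (u :: rest)).headI = (s, s + P.len u, P.col u) := by
  simp [itemArcList]

lemma partA {pat : List (Fin P.n)} (hne : pat ≠ []) (hpat : P.IsPattern pat) :
    P.IsCAPath (P.patPath pat) := by
  obtain ⟨hsum, hchain⟩ := hpat
  have hlast := P.itemArcList_getLastI 0 pat hne
  have hposlen : 1 ≤ (pat.map P.len).sum := by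
    cases pat with
    | nil => exact absurd rfl hne
    | cons u rest =>
      have := P.hlenPos u
      simp only [List.map_cons, List.sum_cons]
      omega
  have hmemI : ∀ a ∈ P.itemArcList 0 pat, a ∈ P.arcs := by
    intro a ha
    obtain ⟨v, hv, h1, h2, h3, h4⟩ := P.mem_itemArcList 0 pat a ha
    apply P.isArc_mem_arcs
    left
    refine ⟨by have := P.hlenPos v; omega, by omega, by rw [h2]; exact P.hcol v,
      v, by omega, h2.symm⟩
  have hcolLast : (P.itemArcList 0 pat).getLastI.2.2 ≠ P.Q + 1 := by
    obtain ⟨v, hv⟩ := hlast.2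
    have := P.hcol v
    simp only [Finset.mem_Icc] at this
    omega
  by_cases hlt : (pat.map P.len).sum < P.L
  · have hloss : P.IsArc ((pat.map P.len).sum, P.L, P.Q + 1) :=
      Or.inr ⟨rfl, rfl, hposlen, by omega⟩
    have hIne : P.itemArcList 0 pat ≠ [] := P.itemArcList_ne_nil hne
    have h2 : P.patPath pat = P.itemArcList 0 pat ++ [((pat.map P.len).sum, P.L, P.Q + 1)] := by
      simp [patPath, hlt]
    refine ⟨?_, ?_, ?_, ?_, ?_⟩
    · rw [h2]; simp
    · intro a ha
      rw [h2] at ha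
      rw [List.mem_append, List.mem_singleton] at ha
      rcases ha with ha | rfl
      · exact hmemI a ha
      · exact P.isArc_mem_arcs hloss
    · cases pat with
      | nil => exact absurd rfl hne
      | cons u rest => simp [patPath, itemArcList]
    · rw [h2, List.getLastI_eq_getLast?, List.getLast?_append_of_ne_nil _ (by simp)]
      simp
    · rw [h2, List.Chain', List.isChain_append]
      refine ⟨P.itemArcList_chain' 0 pat hchain, List.isChain_singleton _, ?_⟩
      intro x hx y hy
      simp only [List.head?_cons, Option.mem_some_iff] at hy
      subst hy
      have hxI : (P.itemArcList 0 pat).getLastI = x := by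
        rw [List.getLastI_eq_getLast?, Option.mem_def.mp hx, Option.getD_some]
      refine ⟨?_, ?_⟩
      · rw [← hxI, hlast.1]; exact Nat.zero_add _
      · rw [← hxI]; exact hcolLast
  · have hP : P.patPath pat = P.itemArcList 0 pat := by simp [patPath, hlt]
    refine ⟨?_, ?_, ?_, ?_, ?_⟩
    · rw [hP]; exact P.itemArcList_ne_nil hne
    · rw [hP]; exact hmemI
    · rw [hP]
      cases pat with
      | nil => exact absurd rfl hne
      | cons u rest => rw [P.itemArcList_headI]
    · rw [hP, hlast.1]; omega
    · rw [hP]; exact P.itemArcList_chain' 0 pat hchain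

lemma partB : ∀ (p : List (ℕ × ℕ × ℕ)), (∀ a ∈ p, P.IsArc a) →
    List.Chain' (fun a b => a.2.1 = b.1 ∧ a.2.2 ≠ b.2.2) p →
    ∀ items : List (Fin P.n),
      List.Forall₂ (fun (a : ℕ × ℕ × ℕ) (u : Fin P.n) =>
          P.len u = a.2.1 - a.1 ∧ P.col u = a.2.2)
        (p.filter (fun a => a.2.2 ≠ P.Q + 1)) items →
      p.headI.1 + (items.map P.len).sum ≤ P.L ∧
        List.Chain' (fun u v => P.col u ≠ P.col v) items
  | [], _, _, items, hf => by
    simp only [List.filter_nil] at hf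
    cases hf
    have h0 : ([] : List (ℕ × ℕ × ℕ)).headI.1 = 0 := rfl
    rw [h0]
    have := P.hL
    exact ⟨by simp, List.isChain_nil⟩
  | [a], harc, _, items, hf => by
    have ha := harc a (by simp)
    rcases ha with hitem | hloss
    · have hcol : a.2.2 ≠ P.Q + 1 := by
        have := hitem.2.2.1
        simp only [Finset.mem_Icc] at this
        omega
      rw [List.filter_cons_of_pos (by simpa using hcol), List.filter_nil] at hf
      cases hf with
      | cons hR hnil =>
        cases hnil
        refine ⟨?_, List.isChain_singleton _⟩
        simp only [List.headI, List.map_cons, List.map_nil, List.sum_cons, List.sum_nil]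
        have h1 := hitem.1
        have h2 := hitem.2.1
        have := hR.1
        omega
    · rw [List.filter_cons_of_neg (by simp [hloss.1]), List.filter_nil] at hf
      cases hf
      have := hloss.2.2.2
      have := P.hL
      refine ⟨?_, List.isChain_nil⟩
      simp only [List.headI, List.map_nil, List.sum_nil]
      omega
  | a :: b :: rest, harc, hchain, items, hf => by
    rw [List.Chain', List.isChain_cons_cons] at hchain
    obtain ⟨⟨hab1, hab2⟩, hchain'⟩ := hchain
    have hbarc := harc b (by simp)
    have haitem : P.IsItemArc a := by
      rcases harc a (by simp) with h | h
      · exact h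
      · exfalso
        have := P.arc_start_lt hbarc
        have := h.2.1
        omega
    have hacol : a.2.2 ≠ P.Q + 1 := by
      have := haitem.2.2.1
      simp only [Finset.mem_Icc] at this
      omega
    rw [List.filter_cons_of_pos (by simpa using hacol)] at hf
    cases hf with
    | cons hR hf' =>
      rename_i u items'
      have ih := partB (b :: rest) (fun x hx => harc x (by simp [hx])) hchain' items' hf'
      simp only [List.headI] at ih ⊢
      constructor
      · simp only [List.map_cons, List.sum_cons]
        have h1 := haitem.1
        have h2 := hR.1
        have h3 := ih.1
        omega
      · cases items' with
        | nil => simp [List.Chain']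
        | cons v tail =>
          rw [List.Chain', List.isChain_cons_cons]
          refine ⟨?_, ih.2⟩
          have hbitem : P.IsItemArc b := by
            rcases hbarc with h | h
            · exact h
            · exfalso
              cases rest with
              | nil =>
                rw [List.filter_cons_of_neg (by simp [h.1]), List.filter_nil] at hf'
                cases hf'
              | cons c rest' =>
                rw [List.isChain_cons_cons] at hchain'
                have := P.arc_start_lt (harc c (by simp))
                have h21 := h.2.1
                have hb := hchain'.1.1
                omega
          have hbcol : b.2.2 ≠ P.Q + 1 := by
            have := hbitem.2.2.1
            simp only [Finset.mem_Icc] at this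
            omega
          rw [List.filter_cons_of_pos (by simpa using hbcol)] at hf'
          cases hf' with
          | cons hRb _ =>
            rw [hR.2, hRb.2]
            exact hab2

end CBPP

/-- Packing patterns correspond to color-alternating `0`–`L` paths in the AF_ca graph:
(a) the path associated with any (nonempty) packing pattern is a path from `0` to `L` in
which no two consecutive arcs have the same color; (b) conversely, for any such path, any
sequence of items read off its item arcs (choosing for each item arc `(i,j,q)` an item of
length `j − i` and color `q`) is a packing pattern. -/
theorem stmt_15 (P : CBPP) :
    (∀ pat : List (Fin P.n), pat ≠ [] → P.IsPattern pat → P.IsCAPath (P.patPath pat)) ∧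
    (∀ p : List (ℕ × ℕ × ℕ), P.IsCAPath p →
      ∀ items : List (Fin P.n),
        List.Forall₂ (fun (a : ℕ × ℕ × ℕ) (u : Fin P.n) =>
            P.len u = a.2.1 - a.1 ∧ P.col u = a.2.2)
          (p.filter (fun a => a.2.2 ≠ P.Q + 1)) items →
        P.IsPattern items) := by
  constructor
  · intro pat hne hpat
    exact P.partA hne hpat
  · intro p hp items hf
    obtain ⟨hne, hmem, hhead, hlast, hchain⟩ := hp
    have harc : ∀ a ∈ p, P.IsArc a := by
      intro a ha
      have := hmem a ha
      simp only [CBPP.arcs, Finset.mem_filter] at this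
      exact this.2
    have h := P.partB p harc hchain items hf
    rw [hhead] at h
    exact ⟨by simpa using h.1, h.2⟩
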